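/- For every c > 0, σ > 0 and positive integer n, the n-th Benford–Fourier coefficient of the generalized Gaussian density admits the closed form a_n = ∫_{ℝ} P_{c,σ}(x)·exp(−2πi·n·log₁₀|x|) dx = (2A/(β·c))·exp(2πi·n·(ln β)/(ln 10))·Γ_ℂ((ln 10 − 2πi·n)/(c·ln 10)), where Γ_ℂ denotes the Gamma function of a complex argument. -/

import Mathlib

/-!
The density is even, so `a_n` is twice the integral over `(0, ∞)`, where
`exp (-2πi n log₁₀ x) = x ^ (s - 1)` with `s = 1 - 2πi n / ln 10`. Hence `a_n` is `2A`
times the Mellin transform of `t ↦ exp (-(β t) ^ c)` at `s`, and the substitutions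
`t ↦ β t`, `t ↦ t ^ c` reduce that transform to `β ^ (-s) c⁻¹ Γ(s / c)`.
-/

open Real MeasureTheory

/-- Scale parameter β of the generalized Gaussian density. -/
noncomputable def ggdBeta (c σ : ℝ) : ℝ :=
  (1 / σ) * Real.sqrt (Real.Gamma (3 / c) / Real.Gamma (1 / c))

/-- Normalizing constant A of the generalized Gaussian density. -/
noncomputable def ggdA (c σ : ℝ) : ℝ :=
  ggdBeta c σ * c / (2 * Real.Gamma (1 / c))

/-- The generalized Gaussian density with shape factor `c` and scale `σ`. -/
noncomputable def ggdPdf (c σ : ℝ) (x : ℝ) : ℝ :=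
  ggdA c σ * Real.exp (-|ggdBeta c σ * x| ^ c)


/-- The `n`-th Benford–Fourier coefficient of the generalized Gaussian density:
`a_n = ∫ P_{c,σ}(x) · exp(−2πi·n·log₁₀|x|) dx`. -/
noncomputable def bfCoeff (c σ : ℝ) (n : ℕ) : ℂ :=
  ∫ x : ℝ, (ggdPdf c σ x : ℂ) *
    Complex.exp (-((2 * π * n * Real.logb 10 |x| : ℝ) : ℂ) * Complex.I)

open Set

theorem integral_comp_abs_eq_two_smul {E : Type*} [NormedAddCommGroup E] [NormedSpace ℝ E]
    (f : ℝ → E) : ∫ x, f |x| = (2 : ℝ) • ∫ x in Ioi (0 : ℝ), f x := by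
  have hIoi : EqOn (fun x => f |x|) f (Ioi 0) := fun x (hx : 0 < x) => by simp only [abs_of_pos hx]
  have hIoi_eq : ∫ x in Ioi (0 : ℝ), f |x| = ∫ x in Ioi (0 : ℝ), f x :=
    setIntegral_congr_fun measurableSet_Ioi hIoi
  by_cases hf : IntegrableOn f (Ioi 0)
  · have hf_abs : IntegrableOn (fun x => f |x|) (Ioi 0) := hf.congr_fun hIoi.symm measurableSet_Ioi
    have hf_abs_Iic : IntegrableOn (fun x => f |x|) (Iic 0) := by
      have hneg : MeasurableEmbedding fun x : ℝ => -x := (Homeomorph.neg ℝ).measurableEmbedding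
      rw [← Measure.map_neg_eq_self (volume : Measure ℝ), hneg.integrableOn_map_iff]
      simp_rw [Function.comp_def, abs_neg, neg_preimage, neg_Iic, neg_zero]
      exact Iff.mpr integrableOn_Ici_iff_integrableOn_Ioi hf_abs
    have hIic_eq : ∫ x in Iic (0 : ℝ), f |x| = ∫ x in Ioi (0 : ℝ), f x := by
      have h := integral_comp_neg_Ioi (0 : ℝ) fun x => f |x|
      simp only [abs_neg, neg_zero] at h
      rw [← h, hIoi_eq]
    rw [← intervalIntegral.integral_Iic_add_Ioi hf_abs_Iic hf_abs, hIic_eq, hIoi_eq, two_smul]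
  · -- both sides are the junk value `0`
    have hf_abs : ¬Integrable fun x => f |x| :=
      fun h => hf (h.integrableOn.congr_fun hIoi measurableSet_Ioi)
    rw [integral_undef hf_abs, integral_undef hf, smul_zero]

theorem cexp_neg_mul_logb_mul_I {x : ℝ} (hx : 0 < x) (a b : ℝ) :
    Complex.exp (-((a * Real.logb b x : ℝ) : ℂ) * Complex.I) =
      (x : ℂ) ^ (-(((a / Real.log b : ℝ) : ℂ) * Complex.I)) := by
  rw [Complex.cpow_def_of_ne_zero (by exact_mod_cast hx.ne'), ← Complex.ofReal_log hx.le,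
    Real.logb]
  push_cast
  congr 1
  ring

theorem ofReal_cpow_neg_one_sub_mul_I {β : ℝ} (hβ : 0 < β) (y : ℝ) :
    (β : ℂ) ^ (-(1 - (y : ℂ) * Complex.I)) =
      ((β⁻¹ : ℝ) : ℂ) * Complex.exp (((y * Real.log β : ℝ) : ℂ) * Complex.I) := by
  rw [Complex.cpow_def_of_ne_zero (by exact_mod_cast hβ.ne'), ← Complex.ofReal_log hβ.le,
    ← Real.exp_log (inv_pos.2 hβ), Real.log_inv, Complex.ofReal_exp, ← Complex.exp_add]
  push_cast
  congr 1
  ring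

theorem mellin_exp_neg_mul_rpow {β c : ℝ} {s : ℂ} (hβ : 0 < β) (hc : 0 < c) (hs : 0 < s.re) :
    mellin (fun t : ℝ => ((Real.exp (-(β * t) ^ c) : ℝ) : ℂ)) s =
      (β : ℂ) ^ (-s) * (c⁻¹ * Complex.Gamma (s / c)) := by
  have hsc : 0 < (s / c).re := by rw [Complex.div_ofReal_re]; positivity
  rw [mellin_comp_mul_left (fun u : ℝ => ((Real.exp (-u ^ c) : ℝ) : ℂ)) s hβ,
    mellin_comp_rpow (fun v : ℝ => ((Real.exp (-v) : ℝ) : ℂ)),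
    ← Complex.GammaIntegral_eq_mellin, Complex.Gamma_eq_integral hsc, abs_of_pos hc, smul_eq_mul,
    Complex.real_smul]

theorem ggdBeta_pos {c σ : ℝ} (hc : 0 < c) (hσ : 0 < σ) : 0 < ggdBeta c σ := by
  have hΓ3 : 0 < Real.Gamma (3 / c) := Real.Gamma_pos_of_pos (by positivity)
  have hΓ1 : 0 < Real.Gamma (1 / c) := Real.Gamma_pos_of_pos (by positivity)
  unfold ggdBeta
  positivity

theorem ggdPdf_abs (c σ x : ℝ) : ggdPdf c σ |x| = ggdPdf c σ x := by
  simp only [ggdPdf, abs_mul, abs_abs]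

theorem ggdPdf_of_pos {c σ x : ℝ} (hβ : 0 ≤ ggdBeta c σ) (hx : 0 < x) :
    ggdPdf c σ x = ggdA c σ * Real.exp (-(ggdBeta c σ * x) ^ c) := by
  rw [ggdPdf, abs_of_nonneg (mul_nonneg hβ hx.le)]

theorem bfCoeff_eq_mellin {c σ : ℝ} (hβ : 0 ≤ ggdBeta c σ) (n : ℕ) :
    bfCoeff c σ n = 2 * ggdA c σ *
      mellin (fun t : ℝ => ((Real.exp (-(ggdBeta c σ * t) ^ c) : ℝ) : ℂ))
        (1 - ((2 * π * n / Real.log 10 : ℝ) : ℂ) * Complex.I) := by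
  have h := integral_comp_abs_eq_two_smul fun x => (ggdPdf c σ x : ℂ) *
    Complex.exp (-((2 * π * n * Real.logb 10 x : ℝ) : ℂ) * Complex.I)
  simp only [ggdPdf_abs] at h
  rw [bfCoeff, h, mellin, Complex.real_smul, Complex.ofReal_ofNat, mul_assoc (2 : ℂ),
    ← integral_const_mul (ggdA c σ : ℂ)]
  congr 1
  refine setIntegral_congr_fun measurableSet_Ioi fun x (hx : 0 < x) => ?_
  rw [ggdPdf_of_pos hβ hx, cexp_neg_mul_logb_mul_I hx, smul_eq_mul, sub_sub_cancel_left,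
    Complex.ofReal_mul]
  ring

theorem bfCoeff_closed_form_general (c σ : ℝ) (hc : 0 < c) (hσ : 0 < σ) (n : ℕ) :
    bfCoeff c σ n =
      ((2 * ggdA c σ / (ggdBeta c σ * c) : ℝ) : ℂ) *
        Complex.exp (((2 * π * n * Real.log (ggdBeta c σ) / Real.log 10 : ℝ) : ℂ) * Complex.I) *
        Complex.Gamma ((((Real.log 10 : ℝ) : ℂ) - 2 * π * n * Complex.I) /
          (((c * Real.log 10 : ℝ) : ℂ))) := by
  have hβ := ggdBeta_pos hc hσ
  have hL : (Real.log 10 : ℂ) ≠ 0 := by exact_mod_cast (Real.log_pos (by norm_num)).ne'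
  have hs : 0 < (1 - ((2 * π * n / Real.log 10 : ℝ) : ℂ) * Complex.I).re := by
    rw [Complex.sub_re, Complex.one_re, Complex.re_ofReal_mul, Complex.I_re]
    norm_num
  have hΓ : (1 - ((2 * π * n / Real.log 10 : ℝ) : ℂ) * Complex.I) / c =
      ((Real.log 10 : ℝ) - 2 * π * n * Complex.I) / ((c * Real.log 10 : ℝ) : ℂ) := by
    push_cast
    field_simp
  rw [bfCoeff_eq_mellin hβ.le, mellin_exp_neg_mul_rpow hβ hc hs, hΓ,
    ofReal_cpow_neg_one_sub_mul_I hβ]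
  push_cast
  field_simp

/-- Closed form of the `n`-th Benford–Fourier coefficient of the generalized
Gaussian density. -/
theorem bfCoeff_closed_form (c σ : ℝ) (hc : 0 < c) (hσ : 0 < σ) (n : ℕ) (hn : 0 < n) :
    bfCoeff c σ n =
      ((2 * ggdA c σ / (ggdBeta c σ * c) : ℝ) : ℂ) *
        Complex.exp (((2 * π * n * Real.log (ggdBeta c σ) / Real.log 10 : ℝ) : ℂ) * Complex.I) *
        Complex.Gamma ((((Real.log 10 : ℝ) : ℂ) - 2 * π * n * Complex.I) /
          (((c * Real.log 10 : ℝ) : ℂ))) :=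
  bfCoeff_closed_form_general c σ hc hσ n
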